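/- arXiv:2409.16508 — 4 statements merged into one kernel-verified Lean document; each statement's English description precedes it below -/
import Mathlib

section
/- Let c > 0. The function t ↦ c · arccos(t) · √((1+t)/(1-t)) is strictly increasing on (-1,1), and its limit as t → 1⁻ equals 2c. -/
/-!
Up to the factor `c`, the function is `arccos t * (1 + t) / √(1 - t²)`. With `θ = arccos t`
we have `√(1 - t²) = sin θ`, and the derivative
`(arccos t - √(1 - t²)) / ((1 - t) √(1 - t²))` is positive because `sin θ < θ`.
Near `t = 1` the function equals `(1 + t) / sinc (arccos t)`, which is continuous at `1`
with value `2 / sinc 0 = 2`.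
-/

open Real Filter Set Topology

namespace Real

lemma sqrt_one_add_div_one_sub {x : ℝ} (hx : -1 < x) :
    √((1 + x) / (1 - x)) = (1 + x) / √(1 - x ^ 2) := by
  have hpos : 0 < 1 + x := by linarith
  rw [show 1 - x ^ 2 = (1 + x) * (1 - x) by ring, sqrt_mul hpos.le, sqrt_div hpos.le]
  field_simp
  rw [sq_sqrt hpos.le]

lemma sqrt_one_sub_sq_lt_arccos {x : ℝ} (hx : x < 1) : √(1 - x ^ 2) < arccos x := by
  simpa only [sin_arccos] using sin_lt (arccos_pos.2 hx)

lemma hasDerivAt_one_add_div_one_sub {x : ℝ} (hx : x ≠ 1) :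
    HasDerivAt (fun t => (1 + t) / (1 - t)) (2 / (1 - x) ^ 2) x := by
  have h := ((hasDerivAt_id x).const_add 1).div ((hasDerivAt_id x).const_sub 1)
    (sub_ne_zero.2 hx.symm)
  refine h.congr_deriv ?_
  simp only [id]
  ring

lemma hasDerivAt_arccos_mul_sqrt_one_add_div_one_sub {x : ℝ} (h₁ : -1 < x) (h₂ : x < 1) :
    HasDerivAt (fun t => arccos t * √((1 + t) / (1 - t)))
      ((arccos x - √(1 - x ^ 2)) / ((1 - x) * √(1 - x ^ 2))) x := by
  have hsq : 0 < 1 - x ^ 2 := by nlinarith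
  have hsub : 1 - x ≠ 0 := by linarith
  have hadd : 1 + x ≠ 0 := by linarith
  have h := (hasDerivAt_arccos h₁.ne' h₂.ne).mul
    ((hasDerivAt_one_add_div_one_sub h₂.ne).sqrt (div_pos (by linarith) (by linarith)).ne')
  refine h.congr_deriv ?_
  rw [sqrt_one_add_div_one_sub h₁]
  field_simp
  linear_combination (√(1 - x ^ 2) * arccos x + 1 - x ^ 2) * sq_sqrt hsq.le

lemma strictMonoOn_arccos_mul_sqrt_one_add_div_one_sub :
    StrictMonoOn (fun t => arccos t * √((1 + t) / (1 - t))) (Ioo (-1) 1) := by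
  refine strictMonoOn_of_deriv_pos (convex_Ioo _ _) (fun x hx => ?_) (fun x hx => ?_)
  · exact (hasDerivAt_arccos_mul_sqrt_one_add_div_one_sub hx.1 hx.2).continuousAt
      |>.continuousWithinAt
  · rw [interior_Ioo] at hx
    rw [(hasDerivAt_arccos_mul_sqrt_one_add_div_one_sub hx.1 hx.2).deriv]
    have hsq : 0 < √(1 - x ^ 2) := sqrt_pos.2 (by nlinarith [hx.1, hx.2])
    exact div_pos (sub_pos.2 (sqrt_one_sub_sq_lt_arccos hx.2))
      (mul_pos (by linarith [hx.2]) hsq)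

lemma arccos_mul_sqrt_one_add_div_one_sub_eq_div_sinc {x : ℝ} (h₁ : -1 < x) (h₂ : x < 1) :
    arccos x * √((1 + x) / (1 - x)) = (1 + x) / sinc (arccos x) := by
  rw [sinc_of_ne_zero (arccos_pos.2 h₂).ne', sin_arccos, sqrt_one_add_div_one_sub h₁]
  field_simp

lemma tendsto_arccos_mul_sqrt_one_add_div_one_sub :
    Tendsto (fun t => arccos t * √((1 + t) / (1 - t))) (𝓝[<] 1) (𝓝 2) := by
  have hcont : ContinuousAt (fun t => (1 + t) / sinc (arccos t)) 1 :=
    (continuousAt_const.add continuousAt_id).div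
      (continuous_sinc.comp continuous_arccos).continuousAt (by simp)
  have h := hcont.tendsto.mono_left (nhdsWithin_le_nhds (s := Iio 1))
  norm_num at h
  refine h.congr' ?_
  filter_upwards [Ioo_mem_nhdsLT (show (-1 : ℝ) < 1 by norm_num)] with t ht
  exact (arccos_mul_sqrt_one_add_div_one_sub_eq_div_sinc ht.1 ht.2).symm

end Real

theorem strictMono_arccos_mul_sqrt (c : ℝ) (hc : 0 < c) :
    StrictMonoOn (fun t : ℝ => c * Real.arccos t * Real.sqrt ((1 + t) / (1 - t)))
      (Set.Ioo (-1 : ℝ) 1) ∧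
    Filter.Tendsto (fun t : ℝ => c * Real.arccos t * Real.sqrt ((1 + t) / (1 - t)))
      (nhdsWithin 1 (Set.Iio 1)) (nhds (2 * c)) := by
  simp only [mul_assoc c]
  refine ⟨fun x hx y hy hxy => ?_, ?_⟩
  · exact mul_lt_mul_of_pos_left (strictMonoOn_arccos_mul_sqrt_one_add_div_one_sub hx hy hxy) hc
  · simpa only [mul_comm c] using tendsto_arccos_mul_sqrt_one_add_div_one_sub.const_mul c
end

section
/- Let α ≥ β ≥ -1/2 with α > β, and let s ≥ 2(α - β) with s > 0. Then for all t in (0,1), (1-t)^(α-β)/(arccos t)^s - (1+t)^(α-β)/(arccos(-t))^s > 0. -/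
/-!
Put `θ = arccos t ∈ (0, π/2)`, so that `arccos (-t) = π - θ` and
`(1 - t) / (1 + t) = tan² (θ/2)`. The claim is then
`(θ / (π - θ)) ^ s < tan (θ/2) ^ (2 (α - β))`, and since `θ / (π - θ) < 1` and
`s ≥ 2 (α - β)` it suffices that `θ / (π - θ) < tan (θ/2)`. With `w = π/4 - θ/2` this is
the inequality `tan w < 4 w / π` on `(0, π/4)`, i.e. convexity of `tan` between `0` and `π/4`.
-/

open Real Set

theorem Real.strictConvexOn_tan : StrictConvexOn ℝ (Ico 0 (π / 2)) tan := by
  refine StrictMonoOn.strictConvexOn_of_deriv (convex_Ico _ _)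
    (continuousOn_tan_Ioo.mono fun x hx => ⟨by linarith [hx.1, pi_pos], hx.2⟩) ?_
  rw [interior_Ico]
  intro x hx y hy hxy
  have hcy : 0 < cos y := cos_pos_of_mem_Ioo ⟨by linarith [hy.1, pi_pos], hy.2⟩
  have hcos : cos y < cos x := cos_lt_cos_of_nonneg_of_le_pi_div_two hx.1.le hy.2.le hxy
  simp only [deriv_tan]
  gcongr

theorem Real.tan_lt_four_div_pi_mul {w : ℝ} (h0 : 0 < w) (h1 : w < π / 4) :
    tan w < 4 / π * w := by
  have hr1 : 4 / π * w < 1 := by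
    rw [← lt_div_iff₀' (by positivity)]; field_simp; linarith
  have hconv := strictConvexOn_tan.2 (x := 0) (y := π / 4) ⟨le_rfl, by linarith [pi_pos]⟩
    ⟨by positivity, by linarith [pi_pos]⟩ (by positivity : (0 : ℝ) < π / 4).ne
    (sub_pos.2 hr1) (by positivity) (sub_add_cancel _ _)
  have hw : 4 / π * w * (π / 4) = w := by field_simp
  simpa [hw, tan_pi_div_four] using hconv

theorem Real.sq_div_pi_sub_lt_one_sub_cos_div_one_add_cos {θ : ℝ} (h0 : 0 < θ)
    (h1 : θ < π / 2) : (θ / (π - θ)) ^ 2 < (1 - cos θ) / (1 + cos θ) := by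
  set w := (π / 2 - θ) / 2 with hw
  have hw0 : 0 < w := by linarith
  have hT0 : 0 < tan w := tan_pos_of_pos_of_lt_pi_div_two hw0 (by linarith)
  have hT : π * tan w < π - 2 * θ := by
    have := tan_lt_four_div_pi_mul hw0 (by linarith)
    rw [div_mul_eq_mul_div, lt_div_iff₀ pi_pos] at this
    linarith
  have hcos : cos θ = 2 * tan w / (1 + tan w ^ 2) := by
    rw [← sin_pi_div_two_sub, sin_eq_two_mul_tan_half_div_one_add_tan_half_sq]
  have hratio : (1 - cos θ) / (1 + cos θ) = ((1 - tan w) / (1 + tan w)) ^ 2 := by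
    rw [hcos]
    field_simp
    ring
  rw [hratio]
  have hπθ : 0 < π - θ := by linarith
  refine pow_lt_pow_left₀ ?_ (by positivity) two_ne_zero
  rw [div_lt_div_iff₀ hπθ (by positivity)]
  nlinarith

theorem Real.rpow_lt_rpow_of_sq_lt {q r γ s : ℝ} (hq0 : 0 < q) (hq1 : q ≤ 1) (hγ : 0 < γ)
    (hs : 2 * γ ≤ s) (h : q ^ 2 < r) : q ^ s < r ^ γ :=
  calc q ^ s ≤ q ^ (2 * γ) := rpow_le_rpow_of_exponent_ge hq0 hq1 hs
    _ = (q ^ 2) ^ γ := by rw [rpow_mul hq0.le]; norm_cast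
    _ < r ^ γ := rpow_lt_rpow (by positivity) h hγ

theorem jacobi_odd_term_positive_general (α β s : ℝ)
    (hlt : β < α) (hs : 2 * (α - β) ≤ s) :
    ∀ t ∈ Set.Ioo (0 : ℝ) 1,
      0 < (1 - t) ^ (α - β) / (Real.arccos t) ^ s
          - (1 + t) ^ (α - β) / (Real.arccos (-t)) ^ s := by
  rintro t ⟨ht0, ht1⟩
  set θ := arccos t
  have hθ0 : 0 < θ := arccos_pos.2 ht1
  have hθ1 : θ < π / 2 := arccos_lt_pi_div_two.2 ht0
  have hπθ : 0 < π - θ := by linarith [pi_pos]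
  have h1t : 0 < 1 + t := by linarith
  have h1t' : 0 < 1 - t := by linarith
  have hq1 : θ / (π - θ) ≤ 1 := (div_le_one hπθ).2 (by linarith)
  have hsq := sq_div_pi_sub_lt_one_sub_cos_div_one_add_cos hθ0 hθ1
  rw [cos_arccos (by linarith) ht1.le] at hsq
  have key := rpow_lt_rpow_of_sq_lt (by positivity) hq1 (sub_pos.2 hlt) hs hsq
  rw [div_rpow hθ0.le hπθ.le, div_rpow h1t'.le h1t.le,
    div_lt_div_iff₀ (by positivity) (by positivity)] at key
  rw [arccos_neg, sub_pos, div_lt_div_iff₀ (by positivity) (by positivity)]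
  linarith

theorem jacobi_odd_term_positive (α β s : ℝ) (hβ : (-1 : ℝ) / 2 ≤ β) (hαβ : β ≤ α)
    (hlt : β < α) (hs : 2 * (α - β) ≤ s) (hs0 : 0 < s) :
    ∀ t ∈ Set.Ioo (0 : ℝ) 1,
      0 < (1 - t) ^ (α - β) / (Real.arccos t) ^ s
          - (1 + t) ^ (α - β) / (Real.arccos (-t)) ^ s :=
  jacobi_odd_term_positive_general α β s hlt hs
end

section
/- The function h(t) = √((1-t)/2) - arccos(t)/π is nonnegative on [-1,1], vanishes exactly at t = -1 and t = 1, and is strictly positive on (-1,1). -/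
open Real

lemma key_eq (t : ℝ) (ht : t ∈ Set.Icc (-1 : ℝ) 1) :
    Real.sqrt ((1 - t) / 2) = Real.sin (Real.arccos t / 2) := by
  rw [Real.sin_half_eq_sqrt (Real.arccos_nonneg t)
    ((Real.arccos_le_pi t).trans (by linarith [Real.pi_pos])),
    Real.cos_arccos ht.1 ht.2]

lemma key_pos (t : ℝ) (ht : t ∈ Set.Ioo (-1 : ℝ) 1) :
    0 < Real.sqrt ((1 - t) / 2) - Real.arccos t / Real.pi := by
  rw [key_eq t (Set.mem_Icc_of_Ioo ht)]
  have h1 : 0 < Real.arccos t := Real.arccos_pos.2 ht.2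
  have h2 : Real.arccos t < π := by
    rw [Real.arccos, sub_lt_iff_lt_add]
    have := Real.neg_pi_div_two_lt_arcsin.2 ht.1
    linarith
  have := Real.mul_lt_sin (x := Real.arccos t / 2) (by linarith) (by linarith)
  have hπ := Real.pi_pos
  rw [sub_pos]
  calc Real.arccos t / π = 2 / π * (Real.arccos t / 2) := by field_simp
    _ < Real.sin (Real.arccos t / 2) := this

theorem sqrt_sub_arccos_div_pi_nonneg :
    (∀ t ∈ Set.Icc (-1 : ℝ) 1,
        0 ≤ Real.sqrt ((1 - t) / 2) - Real.arccos t / Real.pi) ∧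
    (∀ t ∈ Set.Icc (-1 : ℝ) 1,
        (Real.sqrt ((1 - t) / 2) - Real.arccos t / Real.pi = 0 ↔ t = -1 ∨ t = 1)) ∧
    (∀ t ∈ Set.Ioo (-1 : ℝ) 1,
        0 < Real.sqrt ((1 - t) / 2) - Real.arccos t / Real.pi) := by
  have hπ := Real.pi_pos
  have hend : ∀ t ∈ Set.Icc (-1 : ℝ) 1, t = -1 ∨ t = 1 →
      Real.sqrt ((1 - t) / 2) - Real.arccos t / Real.pi = 0 := by
    rintro t _ (rfl | rfl)
    · rw [Real.arccos_neg_one, show ((1 : ℝ) - -1) / 2 = 1 by norm_num,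
        Real.sqrt_one, div_self hπ.ne', sub_self]
    · simp [Real.arccos_one]
  refine ⟨?_, ?_, key_pos⟩
  · intro t ht
    rcases eq_or_lt_of_le ht.1 with h1 | h1
    · rw [hend t ht (Or.inl h1.symm)]
    rcases eq_or_lt_of_le ht.2 with h2 | h2
    · rw [hend t ht (Or.inr h2)]
    exact (key_pos t ⟨h1, h2⟩).le
  · intro t ht
    constructor
    · intro h
      by_contra hc
      push_neg at hc
      have h1 := lt_of_le_of_ne ht.1 (Ne.symm hc.1)
      have h2 := lt_of_le_of_ne ht.2 hc.2
      exact (key_pos t ⟨h1, h2⟩).ne' h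
    · exact hend t ht
end

section
/- For all t in [-1,1], (t-1)/2 ≤ -(arccos t)²/π², with equality if and only if t = -1 or t = 1. -/
theorem linprog_ineq_geodesic_sq (t : ℝ) (ht : t ∈ Set.Icc (-1 : ℝ) 1) :
    (t - 1) / 2 ≤ -(Real.arccos t) ^ 2 / Real.pi ^ 2 ∧
    ((t - 1) / 2 = -(Real.arccos t) ^ 2 / Real.pi ^ 2 ↔ t = -1 ∨ t = 1) := by
  obtain ⟨h1, h2⟩ := ht
  set θ := Real.arccos t with hθ
  have hπ : (0:ℝ) < Real.pi := Real.pi_pos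
  have hθ0 : 0 ≤ θ := Real.arccos_nonneg t
  have hθπ : θ ≤ Real.pi := Real.arccos_le_pi t
  have hcos : Real.cos θ = t := Real.cos_arccos h1 h2
  have hsq : Real.cos (θ/2) ^ 2 = 1/2 + t/2 := by
    have := Real.cos_sq (θ/2)
    rw [show 2 * (θ/2) = θ by ring, hcos] at this
    linarith
  have hsin : Real.sin (θ/2) ^ 2 = (1 - t)/2 := by
    have := Real.sin_sq_add_cos_sq (θ/2)
    linarith
  have hle : θ / Real.pi ≤ Real.sin (θ/2) := by
    have := Real.mul_le_sin (x := θ/2) (by linarith) (by linarith)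
    calc θ / Real.pi = 2 / Real.pi * (θ/2) := by field_simp
    _ ≤ _ := this
  have hsqle : (θ / Real.pi)^2 ≤ (1 - t)/2 := by
    rw [← hsin]
    exact pow_le_pow_left₀ (by positivity) hle 2
  have key : θ^2 / Real.pi^2 ≤ (1 - t)/2 := by
    rw [div_pow] at hsqle; exact hsqle
  have hneg : ∀ x : ℝ, -(x / Real.pi^2) = -x / Real.pi^2 := fun x => by ring
  constructor
  · linarith [hneg (θ^2), key]
  · constructor
    · intro heq
      by_contra hne
      push_neg at hne
      have ht1 : t < 1 := lt_of_le_of_ne h2 hne.2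
      have htm1 : -1 < t := lt_of_le_of_ne h1 (Ne.symm hne.1)
      have hθpos : 0 < θ := by
        rcases lt_or_eq_of_le hθ0 with h | h
        · exact h
        · exfalso
          have : t = 1 := by
            rw [← hcos, ← h, Real.cos_zero]
          exact hne.2 this
      have hθlt : θ < Real.pi := by
        rcases lt_or_eq_of_le hθπ with h | h
        · exact h
        · exfalso
          have : t = -1 := by rw [← hcos, h, Real.cos_pi]
          exact hne.1 this
      have hlt : θ / Real.pi < Real.sin (θ/2) := by
        have := Real.mul_lt_sin (x := θ/2) (by linarith) (by linarith)
        calc θ / Real.pi = 2 / Real.pi * (θ/2) := by field_simp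
        _ < _ := this
      have hsqlt : (θ / Real.pi)^2 < (1 - t)/2 := by
        rw [← hsin]
        have h0 : 0 ≤ θ / Real.pi := by positivity
        nlinarith
      rw [div_pow] at hsqlt
      have : (t - 1)/2 < -θ^2 / Real.pi^2 := by
        linarith [hneg (θ^2), hsqlt]
      linarith [heq.le, this]
    · rintro (rfl | rfl)
      · rw [hθ, Real.arccos_neg_one]
        field_simp
        norm_num
      · rw [hθ, Real.arccos_one]
        norm_num
end
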